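/- arXiv:2110.03079 — 9 statements merged into one kernel-verified Lean document; each statement's English description precedes it below -/
import Mathlib

section
/- Let t₀ < t₁ be real numbers, let f : ℝ×ℝ×ℝ → ℝ be continuous, let h : ℝ → ℝ be continuous on [t₀,t₁], and let φ : ℝ×ℝ → ℝ be continuously differentiable with φ(t₀,0) = 0 and φ(t₁,0) = 0. Suppose that f(x,y,z) + Dφ(x,y,z) ≥ h(x) for every x ∈ [t₀,t₁] and all y, z ∈ ℝ. Then every continuously differentiable function u : ℝ → ℝ with u(t₀) = u(t₁) = 0 satisfies ∫_{t₀}^{t₁} f(x, u(x), u'(x)) dx ≥ ∫_{t₀}^{t₁} h(x) dx. -/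
/-! Along the graph of `u`, the null Lagrangian `Dφ(x, u, u')` is the derivative of
`x ↦ φ(x, u x)`, so its integral is `φ(t₁, 0) - φ(t₀, 0) = 0`. Integrating the pointwise
bound `f + Dφ ≥ h` therefore gives `∫ f(x, u, u') ≥ ∫ h`. -/

open Real MeasureTheory Set

noncomputable def totalDeriv (φ : ℝ → ℝ → ℝ) (x y z : ℝ) : ℝ :=
  deriv (fun s => φ s y) x + deriv (fun t => φ x t) y * z

theorem totalDeriv_eq_fderiv {φ : ℝ → ℝ → ℝ} {x y : ℝ}
    (hφ : DifferentiableAt ℝ (fun p : ℝ × ℝ => φ p.1 p.2) (x, y)) (z : ℝ) :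
    totalDeriv φ x y z = fderiv ℝ (fun p : ℝ × ℝ => φ p.1 p.2) (x, y) (1, z) := by
  have hx :
      HasDerivAt (fun s => φ s y) (fderiv ℝ (fun p : ℝ × ℝ => φ p.1 p.2) (x, y) (1, 0)) x :=
    (hφ.hasFDerivAt.comp_hasDerivAt x
      ((hasDerivAt_id' x).prodMk (hasDerivAt_const x y)) :)
  have hy :
      HasDerivAt (fun t => φ x t) (fderiv ℝ (fun p : ℝ × ℝ => φ p.1 p.2) (x, y) (0, 1)) y :=
    (hφ.hasFDerivAt.comp_hasDerivAt y
      ((hasDerivAt_const y x).prodMk (hasDerivAt_id' y)) :)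
  have hsplit : ((1 : ℝ), z) = ((1 : ℝ), (0 : ℝ)) + z • ((0 : ℝ), (1 : ℝ)) := by simp
  rw [totalDeriv, hx.deriv, hy.deriv, hsplit, map_add, map_smul, smul_eq_mul, mul_comm]

theorem hasDerivAt_comp_graph {φ : ℝ → ℝ → ℝ} {u : ℝ → ℝ} {x : ℝ}
    (hφ : DifferentiableAt ℝ (fun p : ℝ × ℝ => φ p.1 p.2) (x, u x))
    (hu : DifferentiableAt ℝ u x) :
    HasDerivAt (fun s => φ s (u s)) (totalDeriv φ x (u x) (deriv u x)) x := by
  rw [totalDeriv_eq_fderiv hφ]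
  exact hφ.hasFDerivAt.comp_hasDerivAt x ((hasDerivAt_id' x).prodMk hu.hasDerivAt)

theorem continuous_totalDeriv_comp_graph {φ : ℝ → ℝ → ℝ} {u : ℝ → ℝ}
    (hφ : ContDiff ℝ 1 fun p : ℝ × ℝ => φ p.1 p.2) (hu : ContDiff ℝ 1 u) :
    Continuous fun x => totalDeriv φ x (u x) (deriv u x) := by
  simp_rw [totalDeriv_eq_fderiv (hφ.differentiable one_ne_zero _)]
  exact ((hφ.continuous_fderiv one_ne_zero).comp
    (continuous_id.prodMk hu.continuous)).clm_apply
      (continuous_const.prodMk (hu.continuous_deriv le_rfl))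

theorem integral_totalDeriv_comp_graph {φ : ℝ → ℝ → ℝ} {u : ℝ → ℝ}
    (hφ : ContDiff ℝ 1 fun p : ℝ × ℝ => φ p.1 p.2) (hu : ContDiff ℝ 1 u) (a b : ℝ) :
    ∫ x in a..b, totalDeriv φ x (u x) (deriv u x) = φ b (u b) - φ a (u a) :=
  intervalIntegral.integral_eq_sub_of_hasDerivAt
    (fun x _ => hasDerivAt_comp_graph (hφ.differentiable one_ne_zero _)
      (hu.differentiable one_ne_zero x))
    ((continuous_totalDeriv_comp_graph hφ hu).intervalIntegrable a b)

theorem stmt_0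
    (t₀ t₁ : ℝ) (ht : t₀ < t₁)
    (f : ℝ → ℝ → ℝ → ℝ) (hf : Continuous fun p : ℝ × ℝ × ℝ => f p.1 p.2.1 p.2.2)
    (h : ℝ → ℝ) (hh : ContinuousOn h (Icc t₀ t₁))
    (φ : ℝ → ℝ → ℝ) (hφ : ContDiff ℝ 1 fun p : ℝ × ℝ => φ p.1 p.2)
    (hφ0 : φ t₀ 0 = 0) (hφ1 : φ t₁ 0 = 0)
    (hpoint : ∀ x ∈ Icc t₀ t₁, ∀ y z : ℝ,
      f x y z + deriv (fun s => φ s y) x + deriv (fun t => φ x t) y * z ≥ h x)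
    (u : ℝ → ℝ) (hu : ContDiff ℝ 1 u) (hu0 : u t₀ = 0) (hu1 : u t₁ = 0) :
    (∫ x in t₀..t₁, f x (u x) (deriv u x)) ≥ ∫ x in t₀..t₁, h x := by
  have hfu : Continuous fun x => f x (u x) (deriv u x) :=
    hf.comp (continuous_id.prodMk (hu.continuous.prodMk (hu.continuous_deriv le_rfl)))
  have hDu := continuous_totalDeriv_comp_graph hφ hu
  calc ∫ x in t₀..t₁, h x
      ≤ ∫ x in t₀..t₁, f x (u x) (deriv u x) + totalDeriv φ x (u x) (deriv u x) := by
        refine intervalIntegral.integral_mono_on ht.le (hh.intervalIntegrable_of_Icc ht.le)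
          ((hfu.add hDu).intervalIntegrable _ _) fun x hx => ?_
        rw [totalDeriv, ← add_assoc]
        exact hpoint x hx (u x) (deriv u x)
    _ = ∫ x in t₀..t₁, f x (u x) (deriv u x) := by
        rw [intervalIntegral.integral_add (hfu.intervalIntegrable _ _)
            (hDu.intervalIntegrable _ _),
          integral_totalDeriv_comp_graph hφ hu, hu0, hu1, hφ0, hφ1, sub_self, add_zero]
end

section
/- For every real x with |x| < π/3 (so that 2cos x − 1 > 0) and all y, z ∈ ℝ, the following identity holds: z² − y² − 2y + ((4 − 2cos x)/(2cos x − 1)²)·y² + (4 sin x/(2cos x − 1))·y·z − (1 − 2cos x) = (z + (2 sin x/(2cos x − 1))·y)² + (y − (2cos x − 1))²/(2cos x − 1). In particular the left-hand side is nonnegative. -/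
open Real

theorem half_lt_cos_of_abs_lt_pi_div_three {x : ℝ} (hx : |x| < π / 3) : 1 / 2 < cos x := by
  rw [← cos_abs, ← cos_pi_div_three]
  exact cos_lt_cos_of_nonneg_of_le_pi (abs_nonneg x) (by linarith [pi_pos]) hx

/-- Completing the square in `z`; the remainder collapses to a square in `y` once `s² + c² = 1`
is used. -/
theorem completed_square_identity {K : Type*} [Field K] {c s : K} (hcs : s ^ 2 + c ^ 2 = 1)
    (hd : 2 * c - 1 ≠ 0) (y z : K) :
    z^2 - y^2 - 2*y + ((4 - 2*c)/(2*c - 1)^2)*y^2 + (4*s/(2*c - 1))*y*z - (1 - 2*c)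
      = (z + (2*s/(2*c - 1))*y)^2 + (y - (2*c - 1))^2/(2*c - 1) := by
  field_simp
  linear_combination (-4 * y ^ 2) * hcs

theorem stmt_3 (x y z : ℝ) (hx : |x| < Real.pi / 3) :
    (z^2 - y^2 - 2*y + ((4 - 2*Real.cos x)/(2*Real.cos x - 1)^2)*y^2
        + (4*Real.sin x/(2*Real.cos x - 1))*y*z - (1 - 2*Real.cos x)
      = (z + (2*Real.sin x/(2*Real.cos x - 1))*y)^2
        + (y - (2*Real.cos x - 1))^2/(2*Real.cos x - 1))
    ∧ 0 ≤ z^2 - y^2 - 2*y + ((4 - 2*Real.cos x)/(2*Real.cos x - 1)^2)*y^2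
        + (4*Real.sin x/(2*Real.cos x - 1))*y*z - (1 - 2*Real.cos x) := by
  have hd : 0 < 2 * cos x - 1 := by linarith [half_lt_cos_of_abs_lt_pi_div_three hx]
  have hsq := completed_square_identity (sin_sq_add_cos_sq x) hd.ne' y z
  exact ⟨hsq, hsq ▸ by positivity⟩
end

section
/- Let ω ∈ (0,1). For every x ∈ [−π/3, π/3] and all y, z ∈ ℝ: z² − y² − 2y + ((4 − 2ω cos x)/(2cos x − ω)²)·y² + (4 sin x/(2cos x − ω))·y·z − (1 − (2cos x)/ω) ≥ 0. -/
open Real Set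

theorem stmt_4 (ω : ℝ) (hω : ω ∈ Set.Ioo (0:ℝ) 1)
    (x : ℝ) (hx : x ∈ Set.Icc (-(Real.pi/3)) (Real.pi/3)) (y z : ℝ) :
    z^2 - y^2 - 2*y + ((4 - 2*ω*Real.cos x)/(2*Real.cos x - ω)^2)*y^2
      + (4*Real.sin x/(2*Real.cos x - ω))*y*z - (1 - (2*Real.cos x)/ω) ≥ 0 := by
  obtain ⟨hω0, hω1⟩ := hω
  have hc : (1:ℝ)/2 ≤ Real.cos x := by
    have h1 : Real.cos (π/3) ≤ Real.cos |x| := by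
      apply Real.cos_le_cos_of_nonneg_of_le_pi (abs_nonneg x)
      · linarith [Real.pi_pos]
      · rcases abs_le.mpr ⟨hx.1, hx.2⟩ with h; exact abs_le.mpr ⟨hx.1, hx.2⟩
    rw [Real.cos_abs] at h1
    rw [Real.cos_pi_div_three] at h1
    linarith
  have hd : 0 < 2*Real.cos x - ω := by linarith
  have hs2 : Real.sin x ^ 2 = 1 - Real.cos x ^ 2 := by
    have := Real.sin_sq_add_cos_sq x; linarith
  have key : z^2 - y^2 - 2*y + ((4 - 2*ω*Real.cos x)/(2*Real.cos x - ω)^2)*y^2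
      + (4*Real.sin x/(2*Real.cos x - ω))*y*z - (1 - (2*Real.cos x)/ω)
      = (z + 2*Real.sin x*y/(2*Real.cos x - ω))^2
        + (ω/(2*Real.cos x - ω))*(y - (2*Real.cos x - ω)/ω)^2 := by
    field_simp
    ring_nf
    rw [hs2]; ring
  rw [key]
  positivity
end

section
/- The set of real numbers of the form ∫_{−π/3}^{π/3} (u'(x)² − u(x)² − 2u(x)) dx, where u : ℝ → ℝ ranges over continuously differentiable functions with u(−π/3) = u(π/3) = 0, has least element 2(π/3 − √3); moreover this least value is attained by u*(x) = 2cos x − 1. -/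
/-!
Write `u = u₀ + v` with `u₀ x = 2 cos x - 1` and `v` vanishing at `± π / 3`. Because `u₀` solves the
Euler–Lagrange equation `u₀'' + u₀ + 1 = 0`, the cross term in the expansion of the functional is the
exact derivative `2 (u₀' v)'`, so `F(u) = F(u₀) + ∫ (v'² - v²)`. On an interval inside `(-π/2, π/2)`
the pointwise identity `v'² - v² = (v' + v tan x)² - (v² tan x)'`, which rests on `tan' = 1 + tan²`,
makes the last integral nonnegative.
-/

open Real MeasureTheory Set

noncomputable def energy (a b : ℝ) (u : ℝ → ℝ) : ℝ :=
  ∫ x in a..b, ((deriv u x) ^ 2 - (u x) ^ 2 - 2 * u x)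

lemma integral_sq_deriv_sub_sq_eq {a b : ℝ} {v : ℝ → ℝ} (hv : ContDiff ℝ 1 v)
    (hsub : uIcc a b ⊆ Ioo (-(π / 2)) (π / 2)) (hva : v a = 0) (hvb : v b = 0) :
    ∫ x in a..b, (deriv v x ^ 2 - v x ^ 2) = ∫ x in a..b, (deriv v x + tan x * v x) ^ 2 := by
  have hcos : ∀ x ∈ uIcc a b, cos x ≠ 0 := fun x hx => (cos_pos_of_mem_Ioo (hsub hx)).ne'
  have htan : ContinuousOn tan (uIcc a b) := continuousOn_tan.mono hcos
  have hcos_sq : ContinuousOn (fun x => 1 / cos x ^ 2) (uIcc a b) :=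
    continuousOn_const.div (by fun_prop) fun x hx => pow_ne_zero 2 (hcos x hx)
  have hvc : Continuous v := hv.continuous
  have hv'c : Continuous (deriv v) := hv.continuous_deriv le_rfl
  have hD : ∀ x ∈ uIcc a b, HasDerivAt (fun x => tan x * v x ^ 2)
      (1 / cos x ^ 2 * v x ^ 2 + tan x * (2 * v x * deriv v x)) x := by
    intro x hx
    refine ((hasDerivAt_tan (hcos x hx)).fun_mul
      ((hv.differentiable one_ne_zero x).hasDerivAt.fun_pow 2)).congr_deriv ?_
    push_cast
    ring
  have hpoint : ∀ x ∈ uIcc a b, deriv v x ^ 2 - v x ^ 2 = (deriv v x + tan x * v x) ^ 2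
      - (1 / cos x ^ 2 * v x ^ 2 + tan x * (2 * v x * deriv v x)) := by
    intro x hx
    rw [one_div, ← inv_one_add_tan_sq (hcos x hx), inv_inv]
    ring
  rw [intervalIntegral.integral_congr hpoint,
    intervalIntegral.integral_sub (ContinuousOn.intervalIntegrable (by fun_prop))
      (ContinuousOn.intervalIntegrable (by fun_prop)),
    intervalIntegral.integral_eq_sub_of_hasDerivAt hD
      (ContinuousOn.intervalIntegrable (by fun_prop)), hva, hvb]
  simp

lemma integral_sq_deriv_sub_sq_nonneg {a b : ℝ} {v : ℝ → ℝ} (hv : ContDiff ℝ 1 v) (hab : a ≤ b)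
    (hsub : uIcc a b ⊆ Ioo (-(π / 2)) (π / 2)) (hva : v a = 0) (hvb : v b = 0) :
    0 ≤ ∫ x in a..b, (deriv v x ^ 2 - v x ^ 2) := by
  rw [integral_sq_deriv_sub_sq_eq hv hsub hva hvb]
  exact intervalIntegral.integral_nonneg hab fun x _ => sq_nonneg _

lemma energy_add_of_euler_lagrange {a b : ℝ} {w v : ℝ → ℝ} (hw : ContDiff ℝ 2 w)
    (hEL : ∀ x ∈ uIcc a b, deriv (deriv w) x + w x + 1 = 0) (hv : ContDiff ℝ 1 v)
    (hva : v a = 0) (hvb : v b = 0) :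
    energy a b (w + v) = energy a b w + ∫ x in a..b, (deriv v x ^ 2 - v x ^ 2) := by
  have hw' : ContDiff ℝ 1 (deriv w) := hw.deriv'
  have hwd : Differentiable ℝ w := hw.differentiable two_ne_zero
  have hw'd : Differentiable ℝ (deriv w) := hw'.differentiable one_ne_zero
  have hvd : Differentiable ℝ v := hv.differentiable one_ne_zero
  have hwc : Continuous w := hw.continuous
  have hw'c : Continuous (deriv w) := hw'.continuous
  have hw''c : Continuous (deriv (deriv w)) := hw'.continuous_deriv le_rfl
  have hvc : Continuous v := hv.continuous
  have hv'c : Continuous (deriv v) := hv.continuous_deriv le_rfl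
  have hint : ∀ f : ℝ → ℝ, Continuous f → IntervalIntegrable f volume a b :=
    fun f hf => hf.intervalIntegrable a b
  have hpoint : ∀ x ∈ uIcc a b,
      deriv (w + v) x ^ 2 - (w + v) x ^ 2 - 2 * (w + v) x
        = (deriv w x ^ 2 - w x ^ 2 - 2 * w x) + (deriv v x ^ 2 - v x ^ 2)
          + 2 * (deriv (deriv w) x * v x + deriv w x * deriv v x) := by
    intro x hx
    rw [deriv_add (hwd x) (hvd x), Pi.add_apply,
      show deriv (deriv w) x = -(w x + 1) by linarith [hEL x hx]]
    ring
  have hparts : ∫ x in a..b, (deriv (deriv w) x * v x + deriv w x * deriv v x) = 0 := by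
    rw [intervalIntegral.integral_deriv_mul_eq_sub (fun x _ => (hw'd x).hasDerivAt)
      (fun x _ => (hvd x).hasDerivAt) (hint _ hw''c) (hint _ hv'c), hva, hvb]
    ring
  unfold energy
  rw [intervalIntegral.integral_congr hpoint,
    intervalIntegral.integral_add (hint _ (by fun_prop)) (hint _ (by fun_prop)),
    intervalIntegral.integral_add (hint _ (by fun_prop)) (hint _ (by fun_prop)),
    intervalIntegral.integral_const_mul, hparts, mul_zero, add_zero]

lemma energy_le_of_euler_lagrange {a b : ℝ} {w u : ℝ → ℝ} (hw : ContDiff ℝ 2 w)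
    (hEL : ∀ x ∈ uIcc a b, deriv (deriv w) x + w x + 1 = 0) (hu : ContDiff ℝ 1 u)
    (hua : u a = w a) (hub : u b = w b) (hab : a ≤ b)
    (hsub : uIcc a b ⊆ Ioo (-(π / 2)) (π / 2)) :
    energy a b w ≤ energy a b u := by
  have hv : ContDiff ℝ 1 (u - w) := hu.sub (hw.of_le one_le_two)
  have hva : (u - w) a = 0 := by simp [hua]
  have hvb : (u - w) b = 0 := by simp [hub]
  rw [← add_sub_cancel w u, energy_add_of_euler_lagrange hw hEL hv hva hvb]
  linarith [integral_sq_deriv_sub_sq_nonneg hv hab hsub hva hvb]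

lemma deriv_two_mul_cos_sub_one : deriv (fun s => 2 * cos s - 1) = fun x => -(2 * sin x) := by
  ext x
  simp

lemma energy_two_mul_cos_sub_one :
    energy (-(π / 3)) (π / 3) (fun s => 2 * cos s - 1) = 2 * (π / 3 - √3) := by
  have hpoint : ∀ x : ℝ, deriv (fun s => 2 * cos s - 1) x ^ 2 - (2 * cos x - 1) ^ 2
      - 2 * (2 * cos x - 1) = 1 - 4 * cos (2 * x) := by
    intro x
    rw [deriv_two_mul_cos_sub_one, cos_two_mul]
    linear_combination 4 * sin_sq_add_cos_sq x
  have hsin : sin (2 * (π / 3)) = √3 / 2 := by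
    rw [show 2 * (π / 3) = π - π / 3 by ring, sin_pi_sub, sin_pi_div_three]
  unfold energy
  simp only [hpoint]
  rw [intervalIntegral.integral_sub intervalIntegrable_const
      ((by fun_prop : Continuous fun x => 4 * cos (2 * x)).intervalIntegrable _ _),
    intervalIntegral.integral_const_mul, intervalIntegral.integral_comp_mul_left _ two_ne_zero,
    integral_cos, mul_neg, sin_neg, hsin, intervalIntegral.integral_const, smul_eq_mul]
  ring

theorem stmt_5 :
    IsLeast { r : ℝ | ∃ u : ℝ → ℝ, ContDiff ℝ 1 u ∧ u (-(Real.pi/3)) = 0 ∧ u (Real.pi/3) = 0 ∧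
        r = ∫ x in (-(Real.pi/3))..(Real.pi/3), ((deriv u x)^2 - (u x)^2 - 2 * u x) }
      (2 * (Real.pi/3 - Real.sqrt 3))
    ∧ (∫ x in (-(Real.pi/3))..(Real.pi/3),
        ((deriv (fun s => 2*Real.cos s - 1) x)^2 - (2*Real.cos x - 1)^2 - 2*(2*Real.cos x - 1)))
      = 2 * (Real.pi/3 - Real.sqrt 3) := by
  have hw : ContDiff ℝ 2 (fun s => 2 * cos s - 1) := by fun_prop
  have hEL : ∀ x, deriv (deriv fun s => 2 * cos s - 1) x + (2 * cos x - 1) + 1 = 0 := by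
    intro x
    simp only [deriv_two_mul_cos_sub_one, deriv.fun_neg', deriv_const_mul_field', Real.deriv_sin]
    ring
  have hwa : 2 * cos (-(π / 3)) - 1 = 0 := by norm_num
  have hwb : 2 * cos (π / 3) - 1 = 0 := by norm_num
  have hπ := pi_pos
  have hsub : uIcc (-(π / 3)) (π / 3) ⊆ Ioo (-(π / 2)) (π / 2) := by
    rw [uIcc_of_le (by linarith)]
    exact Icc_subset_Ioo (by linarith) (by linarith)
  refine ⟨⟨⟨_, hw.of_le one_le_two, hwa, hwb, energy_two_mul_cos_sub_one.symm⟩, ?_⟩,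
    energy_two_mul_cos_sub_one⟩
  rintro r ⟨u, hu, hua, hub, rfl⟩
  rw [← energy_two_mul_cos_sub_one]
  exact energy_le_of_euler_lagrange hw (fun x _ => hEL x) hu (hua.trans hwa.symm)
    (hub.trans hwb.symm) (by linarith) hsub
end

section
/- Let n ≥ 1 and let U ⊆ ℝⁿ be open. Let A : U → ℝ^{n×n} be continuously differentiable with A(x) symmetric and positive definite for every x ∈ U, let b, c : U → ℝ with c(x) ≥ 0 on U, let μ ∈ ℝ, and let u : U → ℝ be twice continuously differentiable with u(x) > 0 on U and satisfying −div(x ↦ A(x)∇u(x)) + b(x)·u(x) = μ·c(x)·u(x) on U. Define F : U → ℝⁿ by F(x) = −A(x)∇u(x)/u(x). Then for every λ ≤ μ, every x ∈ U, every y ∈ ℝ and every z ∈ ℝⁿ: ⟨z, A(x)z⟩ + (b(x) − λ·c(x))·y² + (div F)(x)·y² + 2y·⟨F(x), z⟩ ≥ 0. -/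
/-! Writing `G = A ∇u`, the field is `F = -G / u`, so the quotient rule and the equation
`div G = (b - μ c) u` give `div F = ⟨∇u, A ∇u⟩ / u² - (b - μ c)`. Substituting, the expression
equals `(μ - λ) c y² + ⟨w, A w⟩` with `w = z - (y / u) ∇u`, and both summands are nonnegative. -/

open Set

/-- The gradient of a scalar function on `ℝⁿ`, as the vector of partial derivatives. -/
noncomputable def pgrad {n : ℕ} (u : (Fin n → ℝ) → ℝ) (x : Fin n → ℝ) : Fin n → ℝ :=
  fun i => fderiv ℝ u x (Pi.single i 1)

/-- The divergence of a vector field on `ℝⁿ`: `div G (x) = Σᵢ ∂Gᵢ/∂xᵢ (x)`. -/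
noncomputable def pdiv {n : ℕ} (G : (Fin n → ℝ) → (Fin n → ℝ)) (x : Fin n → ℝ) : ℝ :=
  ∑ i, fderiv ℝ G x (Pi.single i 1) i

open Matrix Filter Topology

theorem Matrix.PosSemidef.two_mul_dotProduct_mulVec_le {ι : Type*} [Fintype ι]
    {M : Matrix ι ι ℝ} (hM : M.PosSemidef) (z g : ι → ℝ) (t : ℝ) :
    2 * t * (z ⬝ᵥ M *ᵥ g) ≤ z ⬝ᵥ M *ᵥ z + t ^ 2 * (g ⬝ᵥ M *ᵥ g) := by
  have hsymm : g ⬝ᵥ M *ᵥ z = z ⬝ᵥ M *ᵥ g := by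
    rw [dotProduct_mulVec, ← mulVec_transpose, ← conjTranspose_eq_transpose_of_trivial,
      hM.isHermitian.eq, dotProduct_comm]
  have hnonneg := hM.dotProduct_mulVec_nonneg (z - t • g)
  simp only [star_trivial, mulVec_sub, mulVec_smul, sub_dotProduct, dotProduct_sub,
    smul_dotProduct, dotProduct_smul, hsymm, smul_eq_mul] at hnonneg
  linarith

section Calculus

variable {n : ℕ}

theorem Filter.EventuallyEq.pdiv_eq {F G : (Fin n → ℝ) → (Fin n → ℝ)} {x : Fin n → ℝ}
    (h : F =ᶠ[𝓝 x] G) : pdiv F x = pdiv G x := by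
  simp only [pdiv, h.fderiv_eq]

theorem pdiv_neg (G : (Fin n → ℝ) → (Fin n → ℝ)) (x : Fin n → ℝ) :
    pdiv (fun x' => -G x') x = -pdiv G x := by
  simp [pdiv, fderiv_fun_neg]

theorem pdiv_smul {f : (Fin n → ℝ) → ℝ} {G : (Fin n → ℝ) → (Fin n → ℝ)} {x : Fin n → ℝ}
    (hf : DifferentiableAt ℝ f x) (hG : DifferentiableAt ℝ G x) :
    pdiv (fun x' => f x' • G x') x = f x * pdiv G x + pgrad f x ⬝ᵥ G x := by
  simp [pdiv, pgrad, fderiv_fun_smul hf hG, Finset.mul_sum, Finset.sum_add_distrib, dotProduct]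

theorem pgrad_inv {u : (Fin n → ℝ) → ℝ} {x : Fin n → ℝ} (hu : DifferentiableAt ℝ u x)
    (hx : u x ≠ 0) : pgrad (fun x' => (u x')⁻¹) x = -(u x ^ 2)⁻¹ • pgrad u x := by
  have hinv : HasFDerivAt (fun x' => (u x')⁻¹) ((-(u x ^ 2)⁻¹) • fderiv ℝ u x) x :=
    (hasDerivAt_inv hx).comp_hasFDerivAt x hu.hasFDerivAt
  ext i
  simp [pgrad, hinv.fderiv]

theorem differentiableAt_pgrad {u : (Fin n → ℝ) → ℝ} {x : Fin n → ℝ}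
    (hu : ContDiffAt ℝ 2 u x) : DifferentiableAt ℝ (pgrad u) x :=
  differentiableAt_pi.2 fun _ =>
    ((hu.fderiv_right le_rfl).differentiableAt one_ne_zero).clm_apply (differentiableAt_const _)

theorem DifferentiableAt.mulVec {E : Type*} [NormedAddCommGroup E] [NormedSpace ℝ E]
    {A : E → Matrix (Fin n) (Fin n) ℝ} {v : E → Fin n → ℝ} {x : E}
    (hA : ∀ i j, DifferentiableAt ℝ (fun x' => A x' i j) x) (hv : DifferentiableAt ℝ v x) :
    DifferentiableAt ℝ (fun x' => A x' *ᵥ v x') x :=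
  differentiableAt_pi.2 fun i =>
    show DifferentiableAt ℝ (fun x' => ∑ j, A x' i j * v x' j) x from
      .fun_sum fun j _ => (hA i j).fun_mul (differentiableAt_pi.1 hv j)

end Calculus

theorem stmt_8_general
    (n : ℕ)
    (U : Set (Fin n → ℝ)) (hU : IsOpen U)
    (A : (Fin n → ℝ) → Matrix (Fin n) (Fin n) ℝ)
    (hA : ∀ i j, ContDiffOn ℝ 1 (fun x => A x i j) U)
    (hApos : ∀ x ∈ U, (A x).PosDef)
    (b c : (Fin n → ℝ) → ℝ) (hc : ∀ x ∈ U, 0 ≤ c x)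
    (μ : ℝ)
    (u : (Fin n → ℝ) → ℝ) (hu : ContDiffOn ℝ 2 u U) (hupos : ∀ x ∈ U, 0 < u x)
    (hPDE : ∀ x ∈ U,
      -pdiv (fun x' => (A x').mulVec (pgrad u x')) x + b x * u x = μ * c x * u x)
    (F : (Fin n → ℝ) → (Fin n → ℝ))
    (hF : ∀ x ∈ U, F x = fun i => -((A x).mulVec (pgrad u x) i) / u x)
    (l : ℝ) (hl : l ≤ μ)
    (x : Fin n → ℝ) (hx : x ∈ U) (y : ℝ) (z : Fin n → ℝ) :
    (∑ i, z i * (A x).mulVec z i) + (b x - l * c x) * y^2 + pdiv F x * y^2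
      + 2 * y * (∑ i, F x i * z i) ≥ 0 := by
  have hUx : U ∈ 𝓝 x := hU.mem_nhds hx
  have hux : u x ≠ 0 := (hupos x hx).ne'
  have hu2 : ContDiffAt ℝ 2 u x := hu.contDiffAt hUx
  have hud : DifferentiableAt ℝ u x := hu2.differentiableAt two_ne_zero
  set G := fun x' => A x' *ᵥ pgrad u x'
  have hGd : DifferentiableAt ℝ G x :=
    .mulVec (fun i j => ((hA i j).contDiffAt hUx).differentiableAt one_ne_zero)
      (differentiableAt_pgrad hu2)
  have hFG : F =ᶠ[𝓝 x] fun x' => (u x')⁻¹ • -G x' := by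
    filter_upwards [hUx] with x' hx'
    ext i
    simp [hF x' hx', G, div_eq_inv_mul]
  have hdivG : pdiv G x = (b x - μ * c x) * u x := by linarith [hPDE x hx]
  have hdivF : pdiv F x = (pgrad u x ⬝ᵥ G x) / u x ^ 2 - (b x - μ * c x) := by
    rw [hFG.pdiv_eq, pdiv_smul (f := fun x' => (u x')⁻¹) (G := fun x' => -G x') (hud.inv hux)
      hGd.neg, pdiv_neg, pgrad_inv hud hux, hdivG]
    simp only [smul_dotProduct, dotProduct_neg, smul_eq_mul]
    field_simp
    ring
  have hFz : ∑ i, F x i * z i = -(z ⬝ᵥ G x) / u x := by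
    rw [hF x hx, dotProduct, neg_div, Finset.sum_div, ← Finset.sum_neg_distrib]
    exact Finset.sum_congr rfl fun i _ => by ring
  have hcross := (hApos x hx).posSemidef.two_mul_dotProduct_mulVec_le z (pgrad u x) (y / u x)
  have hcy : 0 ≤ (μ - l) * c x * y ^ 2 :=
    mul_nonneg (mul_nonneg (sub_nonneg.2 hl) (hc x hx)) (sq_nonneg y)
  have hdiag : pgrad u x ⬝ᵥ G x / u x ^ 2 * y ^ 2
      = (y / u x) ^ 2 * (pgrad u x ⬝ᵥ A x *ᵥ pgrad u x) := by ring
  have hmixed : 2 * y * (-(z ⬝ᵥ G x) / u x) = -(2 * (y / u x) * (z ⬝ᵥ A x *ᵥ pgrad u x)) := by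
    ring
  rw [hdivF, hFz]
  change 0 ≤ z ⬝ᵥ A x *ᵥ z + _ + _ + _
  linarith

theorem stmt_8
    (n : ℕ) (hn : 1 ≤ n)
    (U : Set (Fin n → ℝ)) (hU : IsOpen U)
    (A : (Fin n → ℝ) → Matrix (Fin n) (Fin n) ℝ)
    (hA : ∀ i j, ContDiffOn ℝ 1 (fun x => A x i j) U)
    (hAsymm : ∀ x ∈ U, (A x).IsSymm)
    (hApos : ∀ x ∈ U, (A x).PosDef)
    (b c : (Fin n → ℝ) → ℝ) (hc : ∀ x ∈ U, 0 ≤ c x)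
    (μ : ℝ)
    (u : (Fin n → ℝ) → ℝ) (hu : ContDiffOn ℝ 2 u U) (hupos : ∀ x ∈ U, 0 < u x)
    (hPDE : ∀ x ∈ U,
      -pdiv (fun x' => (A x').mulVec (pgrad u x')) x + b x * u x = μ * c x * u x)
    (F : (Fin n → ℝ) → (Fin n → ℝ))
    (hF : ∀ x ∈ U, F x = fun i => -((A x).mulVec (pgrad u x) i) / u x)
    (l : ℝ) (hl : l ≤ μ)
    (x : Fin n → ℝ) (hx : x ∈ U) (y : ℝ) (z : Fin n → ℝ) :
    (∑ i, z i * (A x).mulVec z i) + (b x - l * c x) * y^2 + pdiv F x * y^2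
      + 2 * y * (∑ i, F x i * z i) ≥ 0 :=
  stmt_8_general n U hU A hA hApos b c hc μ u hu hupos hPDE F hF l hl x hx y z
end

section
/- Let t₀ < t₁ be reals, let α : [t₀,t₁] → ℝ be continuously differentiable with α(x) > 0 on [t₀,t₁], and let β, γ : [t₀,t₁] → ℝ be continuous. Let u* : ℝ → ℝ be twice continuously differentiable with u*(t₀) = u*(t₁) = 0 and −(α u*')'(x) + β(x)·u*(x) = γ(x) for all x ∈ [t₀,t₁]. Assume further that ∫_{t₀}^{t₁} (α(x)·v'(x)² + β(x)·v(x)²) dx ≥ 0 for every continuously differentiable v with v(t₀) = v(t₁) = 0. Then for every continuously differentiable w : ℝ → ℝ with w(t₀) = w(t₁) = 0, ∫_{t₀}^{t₁} (α w'² + β w² − 2γ w) dx ≥ −∫_{t₀}^{t₁} γ(x)·u*(x) dx, and moreover ∫_{t₀}^{t₁} (α (u*')² + β (u*)² − 2γ u*) dx = −∫_{t₀}^{t₁} γ·u* dx. -/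
/-!
Write a competitor as `w = u* + v` with `v` vanishing at the endpoints. Expanding the quadratic
integrand gives `J(w) = J(u*) + 2 δJ(u*; v) + Q(v)`. Integrating `α u*' v'` by parts, the
Euler–Lagrange equation makes the first variation `δJ(u*; v)` vanish, and `Q(v) ≥ 0` by assumption.
Testing the first variation with `v = u*` itself gives `J(u*) = -∫ γ u*`.
-/

open Real MeasureTheory Set

noncomputable section

namespace SturmLiouville

variable {a b : ℝ} {α β γ u v : ℝ → ℝ}

def energy (α β γ w : ℝ → ℝ) (a b : ℝ) : ℝ :=
  ∫ x in a..b, (α x * (deriv w x)^2 + β x * (w x)^2 - 2 * γ x * w x)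

def firstVariation (α β γ u v : ℝ → ℝ) (a b : ℝ) : ℝ :=
  ∫ x in a..b, (α x * deriv u x * deriv v x + β x * u x * v x - γ x * v x)

def quadForm (α β v : ℝ → ℝ) (a b : ℝ) : ℝ :=
  ∫ x in a..b, (α x * (deriv v x)^2 + β x * (v x)^2)

theorem hasDerivAt_flux_of_eulerLagrange (hα : ContDiffOn ℝ 1 α (Icc a b)) (hu : ContDiff ℝ 2 u)
    {x : ℝ} (hx : x ∈ Ioo a b)
    (hEL : -deriv (fun s => α s * deriv u s) x + β x * u x = γ x) :
    HasDerivAt (fun s => α s * deriv u s) (β x * u x - γ x) x := by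
  have hαx : DifferentiableAt ℝ α x :=
    (hα.differentiableOn one_ne_zero).differentiableAt (Icc_mem_nhds hx.1 hx.2)
  have hu' : Differentiable ℝ (deriv u) := (hu.deriv' (n := 1)).differentiable one_ne_zero
  have hd : DifferentiableAt ℝ (fun s => α s * deriv u s) x := hαx.mul (hu' x)
  rw [show β x * u x - γ x = deriv (fun s => α s * deriv u s) x by linarith]
  exact hd.hasDerivAt

theorem firstVariation_eq_zero_of_eulerLagrange (hab : a ≤ b) (hα : ContDiffOn ℝ 1 α (Icc a b))
    (hβ : ContinuousOn β (Icc a b)) (hγ : ContinuousOn γ (Icc a b)) (hu : ContDiff ℝ 2 u)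
    (hEL : ∀ x ∈ Ioo a b, -deriv (fun s => α s * deriv u s) x + β x * u x = γ x)
    (hv : ContDiff ℝ 1 v) (hva : v a = 0) (hvb : v b = 0) :
    firstVariation α β γ u v a b = 0 := by
  have hu' : Continuous (deriv u) := hu.continuous_deriv one_le_two
  have hv' : Continuous (deriv v) := hv.continuous_deriv le_rfl
  have hαc := hα.continuousOn
  have huc := hu.continuous
  have hvc := hv.continuous
  have hibp := intervalIntegral.integral_deriv_mul_eq_sub_of_hasDerivAt
    (u := fun s => α s * deriv u s) (u' := fun x => β x * u x - γ x) (v := v) (v' := deriv v)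
    (by rw [uIcc_of_le hab]; fun_prop) (by fun_prop)
    (by
      rw [min_eq_left hab, max_eq_right hab]
      exact fun x hx => hasDerivAt_flux_of_eulerLagrange hα hu hx (hEL x hx))
    (fun x _ => (hv.differentiable one_ne_zero x).hasDerivAt)
    (ContinuousOn.intervalIntegrable_of_Icc hab (by fun_prop))
    (hv'.intervalIntegrable a b)
  rw [hva, hvb, mul_zero, mul_zero, sub_zero] at hibp
  rw [firstVariation, ← hibp]
  congr 1 with x
  ring

theorem energy_add (hab : a ≤ b) (hα : ContinuousOn α (Icc a b))
    (hβ : ContinuousOn β (Icc a b)) (hγ : ContinuousOn γ (Icc a b))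
    (hu : ContDiff ℝ 1 u) (hv : ContDiff ℝ 1 v) :
    energy α β γ (u + v) a b =
      energy α β γ u a b + 2 * firstVariation α β γ u v a b + quadForm α β v a b := by
  have hu' : Continuous (deriv u) := hu.continuous_deriv le_rfl
  have hv' : Continuous (deriv v) := hv.continuous_deriv le_rfl
  have huc := hu.continuous
  have hvc := hv.continuous
  have hderiv : deriv (u + v) = deriv u + deriv v :=
    funext fun x => deriv_add (hu.differentiable one_ne_zero x) (hv.differentiable one_ne_zero x)
  rw [energy, energy, firstVariation, quadForm, hderiv, ← intervalIntegral.integral_const_mul,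
    ← intervalIntegral.integral_add, ← intervalIntegral.integral_add]
  · congr 1 with x
    simp only [Pi.add_apply]
    ring
  all_goals apply ContinuousOn.intervalIntegrable_of_Icc hab; fun_prop

theorem energy_eq_firstVariation_self_sub (hab : a ≤ b) (hα : ContinuousOn α (Icc a b))
    (hβ : ContinuousOn β (Icc a b)) (hγ : ContinuousOn γ (Icc a b)) (hu : ContDiff ℝ 1 u) :
    energy α β γ u a b = firstVariation α β γ u u a b - ∫ x in a..b, γ x * u x := by
  have hu' : Continuous (deriv u) := hu.continuous_deriv le_rfl
  have huc := hu.continuous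
  rw [energy, firstVariation, ← intervalIntegral.integral_sub]
  · congr 1 with x
    ring
  all_goals apply ContinuousOn.intervalIntegrable_of_Icc hab; fun_prop

end SturmLiouville

end

theorem stmt_10_general
    (t₀ t₁ : ℝ) (ht : t₀ < t₁)
    (α β γ : ℝ → ℝ)
    (hα : ContDiffOn ℝ 1 α (Icc t₀ t₁))
    (hβ : ContinuousOn β (Icc t₀ t₁)) (hγ : ContinuousOn γ (Icc t₀ t₁))
    (ustar : ℝ → ℝ) (hustar : ContDiff ℝ 2 ustar)
    (h0 : ustar t₀ = 0) (h1 : ustar t₁ = 0)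
    (hEL : ∀ x ∈ Icc t₀ t₁,
      -deriv (fun s => α s * deriv ustar s) x + β x * ustar x = γ x)
    (hposform : ∀ v : ℝ → ℝ, ContDiff ℝ 1 v → v t₀ = 0 → v t₁ = 0 →
      0 ≤ ∫ x in t₀..t₁, (α x * (deriv v x)^2 + β x * (v x)^2)) :
    (∀ w : ℝ → ℝ, ContDiff ℝ 1 w → w t₀ = 0 → w t₁ = 0 →
      (∫ x in t₀..t₁, (α x * (deriv w x)^2 + β x * (w x)^2 - 2 * γ x * w x))
        ≥ -∫ x in t₀..t₁, γ x * ustar x)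
    ∧ (∫ x in t₀..t₁, (α x * (deriv ustar x)^2 + β x * (ustar x)^2 - 2 * γ x * ustar x))
        = -∫ x in t₀..t₁, γ x * ustar x := by
  have hu : ContDiff ℝ 1 ustar := hustar.of_le one_le_two
  have hcrit : ∀ v, ContDiff ℝ 1 v → v t₀ = 0 → v t₁ = 0 →
      SturmLiouville.firstVariation α β γ ustar v t₀ t₁ = 0 := fun v hv hv0 hv1 =>
    SturmLiouville.firstVariation_eq_zero_of_eulerLagrange ht.le hα hβ hγ hustar
      (fun x hx => hEL x (Ioo_subset_Icc_self hx)) hv hv0 hv1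
  have hmin : SturmLiouville.energy α β γ ustar t₀ t₁ = -∫ x in t₀..t₁, γ x * ustar x := by
    rw [SturmLiouville.energy_eq_firstVariation_self_sub ht.le hα.continuousOn hβ hγ hu,
      hcrit ustar hu h0 h1, zero_sub]
  refine ⟨fun w hw hw0 hw1 => ?_, hmin⟩
  have hv : ContDiff ℝ 1 (w - ustar) := hw.sub hu
  have hv0 : (w - ustar) t₀ = 0 := by simp [hw0, h0]
  have hv1 : (w - ustar) t₁ = 0 := by simp [hw1, h1]
  have hsplit := SturmLiouville.energy_add ht.le hα.continuousOn hβ hγ hu hv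
  rw [add_sub_cancel, hcrit _ hv hv0 hv1, hmin, mul_zero, add_zero] at hsplit
  change SturmLiouville.energy α β γ w t₀ t₁ ≥ _
  rw [ge_iff_le, hsplit]
  exact le_add_of_nonneg_right (hposform _ hv hv0 hv1)

theorem stmt_10
    (t₀ t₁ : ℝ) (ht : t₀ < t₁)
    (α β γ : ℝ → ℝ)
    (hα : ContDiffOn ℝ 1 α (Icc t₀ t₁)) (hαpos : ∀ x ∈ Icc t₀ t₁, 0 < α x)
    (hβ : ContinuousOn β (Icc t₀ t₁)) (hγ : ContinuousOn γ (Icc t₀ t₁))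
    (ustar : ℝ → ℝ) (hustar : ContDiff ℝ 2 ustar)
    (h0 : ustar t₀ = 0) (h1 : ustar t₁ = 0)
    (hEL : ∀ x ∈ Icc t₀ t₁,
      -deriv (fun s => α s * deriv ustar s) x + β x * ustar x = γ x)
    (hposform : ∀ v : ℝ → ℝ, ContDiff ℝ 1 v → v t₀ = 0 → v t₁ = 0 →
      0 ≤ ∫ x in t₀..t₁, (α x * (deriv v x)^2 + β x * (v x)^2)) :
    (∀ w : ℝ → ℝ, ContDiff ℝ 1 w → w t₀ = 0 → w t₁ = 0 →
      (∫ x in t₀..t₁, (α x * (deriv w x)^2 + β x * (w x)^2 - 2 * γ x * w x))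
        ≥ -∫ x in t₀..t₁, γ x * ustar x)
    ∧ (∫ x in t₀..t₁, (α x * (deriv ustar x)^2 + β x * (ustar x)^2 - 2 * γ x * ustar x))
        = -∫ x in t₀..t₁, γ x * ustar x :=
  stmt_10_general t₀ t₁ ht α β γ hα hβ hγ ustar hustar h0 h1 hEL hposform
end

section
/- Let n ≥ 1 and let a, b ∈ ℝⁿ with aᵢ < bᵢ for each i; let Ω be the open box {x ∈ ℝⁿ : aᵢ < xᵢ < bᵢ for all i} with closure K. Let f : ℝⁿ×ℝ×ℝⁿ → ℝ be continuous, h : ℝⁿ → ℝ continuous on K, and φ : ℝⁿ×ℝ → ℝⁿ continuously differentiable with φ(x,0) = 0 for every x ∈ K. Suppose that for every x ∈ K, y ∈ ℝ, z ∈ ℝⁿ: f(x,y,z) + Σᵢ (∂φᵢ/∂xᵢ(x,y) + ∂φᵢ/∂y(x,y)·zᵢ) ≥ h(x). Then every continuously differentiable u : ℝⁿ → ℝ that vanishes on the boundary of K (i.e., u(x) = 0 whenever xᵢ ∈ {aᵢ, bᵢ} for some i) satisfies ∫_Ω f(x, u(x), ∇u(x)) dx ≥ ∫_Ω h(x) dx.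 -/
open MeasureTheory Set

/-!
For `F x := φ x (u x)` the chain rule gives `div F x = Dφ (x, u x, ∇u x)`, so the hypothesis says
`f (x, u, ∇u) ≥ h - div F` pointwise on the box. Since `u = 0` on the boundary and `φ (x, 0) = 0`,
the field `F` vanishes on the boundary, and the divergence theorem gives `∫_Ω div F = 0`.
Integrating the pointwise inequality yields the claim.
-/

noncomputable section Divergence

variable {ι : Type*} [Fintype ι] [DecidableEq ι]

def partialDerivs (u : (ι → ℝ) → ℝ) (x : ι → ℝ) : ι → ℝ :=
  fun i => fderiv ℝ u x (Pi.single i 1)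

def divergence (F : (ι → ℝ) → ι → ℝ) (x : ι → ℝ) : ℝ :=
  ∑ i, fderiv ℝ F x (Pi.single i 1) i

/-- The paper's `Dφ (x, y, z)`. -/
def totalDivergence (φ : (ι → ℝ) → ℝ → ι → ℝ) (x : ι → ℝ) (y : ℝ) (z : ι → ℝ) : ℝ :=
  ∑ i, (fderiv ℝ (fun x' => φ x' y i) x (Pi.single i 1) + deriv (fun t => φ x t i) y * z i)

theorem continuous_partialDerivs {u : (ι → ℝ) → ℝ} (hu : ContDiff ℝ 1 u) :
    Continuous (partialDerivs u) :=
  continuous_pi fun _ => (hu.continuous_fderiv one_ne_zero).clm_apply continuous_const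

theorem continuous_divergence {F : (ι → ℝ) → ι → ℝ} (hF : ContDiff ℝ 1 F) :
    Continuous (divergence F) :=
  continuous_finsetSum _ fun i _ =>
    (continuous_apply i).comp ((hF.continuous_fderiv one_ne_zero).clm_apply continuous_const)

theorem divergence_comp_graph {φ : (ι → ℝ) → ℝ → ι → ℝ} {u : (ι → ℝ) → ℝ} {x : ι → ℝ}
    (hφ : DifferentiableAt ℝ (fun p : (ι → ℝ) × ℝ => φ p.1 p.2) (x, u x))
    (hu : DifferentiableAt ℝ u x) :
    divergence (fun x => φ x (u x)) x = totalDivergence φ x (u x) (partialDerivs u x) := by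
  set L := fderiv ℝ (fun p : (ι → ℝ) × ℝ => φ p.1 p.2) (x, u x)
  have hgraph : HasFDerivAt (fun x => φ x (u x))
      (L.comp ((ContinuousLinearMap.id ℝ _).prod (fderiv ℝ u x))) x := by
    exact hφ.hasFDerivAt.comp x ((hasFDerivAt_id x).prodMk hu.hasFDerivAt)
  have hpartial_x (i : ι) : HasFDerivAt (fun x' => φ x' (u x) i)
      (((ContinuousLinearMap.proj i).comp L).comp (ContinuousLinearMap.inl ℝ _ ℝ)) x := by
    exact ((ContinuousLinearMap.proj i).hasFDerivAt.comp _ hφ.hasFDerivAt).comp x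
      (hasFDerivAt_prodMk_left (𝕜 := ℝ) x (u x))
  have hpartial_y (i : ι) : HasFDerivAt (fun t => φ x t i)
      (((ContinuousLinearMap.proj i).comp L).comp (ContinuousLinearMap.inr ℝ (ι → ℝ) ℝ)) (u x) := by
    exact ((ContinuousLinearMap.proj i).hasFDerivAt.comp _ hφ.hasFDerivAt).comp (u x)
      (hasFDerivAt_prodMk_right x (u x))
  refine Finset.sum_congr rfl fun i _ => ?_
  rw [hgraph.fderiv, (hpartial_x i).fderiv, (hpartial_y i).hasDerivAt.deriv]
  have hsplit : ((Pi.single i 1 : ι → ℝ), fderiv ℝ u x (Pi.single i 1))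
      = ((Pi.single i 1 : ι → ℝ), (0 : ℝ)) + fderiv ℝ u x (Pi.single i 1) • (0, 1) := by
    simp
  simp only [ContinuousLinearMap.comp_apply, ContinuousLinearMap.prod_apply,
    ContinuousLinearMap.id_apply, hsplit, map_add, map_smul]
  simp [partialDerivs, mul_comm]

end Divergence

theorem integral_divergence_pi_Ioo_eq_zero {n : ℕ} {a b : Fin n → ℝ} (hab : a ≤ b)
    {F : (Fin n → ℝ) → Fin n → ℝ} (hF : ContDiff ℝ 1 F)
    (hF0 : ∀ x ∈ Icc a b, (∃ i, x i = a i ∨ x i = b i) → F x = 0) :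
    ∫ x in univ.pi (fun i => Ioo (a i) (b i)), divergence F x = 0 := by
  cases n with
  | zero => simp [divergence]
  | succ n =>
    have hface (i : Fin (n + 1)) (c : ℝ) (hc : c = a i ∨ c = b i) :
        ∫ x in Icc (a ∘ i.succAbove) (b ∘ i.succAbove), F (i.insertNth c x) i = 0 := by
      refine setIntegral_eq_zero_of_forall_eq_zero fun x hx => ?_
      have hmem : i.insertNth c x ∈ Icc a b := by
        refine Fin.insertNth_mem_Icc.2 ⟨?_, hx⟩
        rcases hc with rfl | rfl
        · exact ⟨le_rfl, hab i⟩
        · exact ⟨hab i, le_rfl⟩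
      rw [hF0 _ hmem ⟨i, by simpa using hc⟩, Pi.zero_apply]
    rw [volume_pi, setIntegral_congr_set Measure.univ_pi_Ioo_ae_eq_Icc, ← volume_pi]
    unfold divergence
    rw [integral_divergence_of_hasFDerivAt_off_countable a b hab F (fderiv ℝ F) ∅
      countable_empty hF.continuous.continuousOn
      (fun x _ => (hF.differentiable one_ne_zero x).hasFDerivAt)
      ((continuous_divergence hF).continuousOn.integrableOn_compact isCompact_Icc)]
    simp [hface]

theorem stmt_15_general
    (n : ℕ)
    (a b : Fin n → ℝ) (hab : ∀ i, a i < b i)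
    (f : (Fin n → ℝ) → ℝ → (Fin n → ℝ) → ℝ)
    (hf : Continuous fun p : (Fin n → ℝ) × ℝ × (Fin n → ℝ) => f p.1 p.2.1 p.2.2)
    (h : (Fin n → ℝ) → ℝ)
    (hh : ContinuousOn h (Set.Icc a b))
    (φ : (Fin n → ℝ) → ℝ → (Fin n → ℝ))
    (hφ : ContDiff ℝ 1 fun p : (Fin n → ℝ) × ℝ => φ p.1 p.2)
    (hφ0 : ∀ x ∈ Set.Icc a b, φ x 0 = 0)
    (hpoint : ∀ x ∈ Set.Icc a b, ∀ (y : ℝ) (z : Fin n → ℝ),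
      f x y z + ∑ i, (fderiv ℝ (fun x' => φ x' y i) x (Pi.single i 1)
        + deriv (fun t => φ x t i) y * z i) ≥ h x)
    (u : (Fin n → ℝ) → ℝ) (hu : ContDiff ℝ 1 u)
    (hubc : ∀ x ∈ Set.Icc a b, (∃ i, x i = a i ∨ x i = b i) → u x = 0) :
    (∫ x in Set.univ.pi (fun i => Set.Ioo (a i) (b i)),
        f x (u x) (fun i => fderiv ℝ u x (Pi.single i 1)))
      ≥ ∫ x in Set.univ.pi (fun i => Set.Ioo (a i) (b i)), h x := by
  set Ω := univ.pi fun i => Ioo (a i) (b i)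
  have hΩ : Ω ⊆ Icc a b := by
    rw [← pi_univ_Icc]
    exact pi_mono fun i _ => Ioo_subset_Icc_self
  have hint {g : (Fin n → ℝ) → ℝ} (hg : ContinuousOn g (Icc a b)) : IntegrableOn g Ω :=
    (hg.integrableOn_compact isCompact_Icc).mono_set hΩ
  have hF : ContDiff ℝ 1 fun x => φ x (u x) := hφ.comp (contDiff_id.prodMk hu)
  have hdiv_zero : ∫ x in Ω, divergence (fun x => φ x (u x)) x = 0 :=
    integral_divergence_pi_Ioo_eq_zero (fun i => (hab i).le) hF fun x hx hbd => by
      rw [hubc x hx hbd, hφ0 x hx]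
  have hfu : Continuous fun x => f x (u x) (partialDerivs u x) :=
    hf.comp (continuous_id.prodMk (hu.continuous.prodMk (continuous_partialDerivs hu)))
  have hpointwise (x : Fin n → ℝ) (hx : x ∈ Ω) :
      h x - divergence (fun x => φ x (u x)) x ≤ f x (u x) (partialDerivs u x) := by
    have := hpoint x (hΩ hx) (u x) (partialDerivs u x)
    rw [divergence_comp_graph (hφ.differentiable one_ne_zero _) (hu.differentiable one_ne_zero x),
      totalDivergence]
    linarith
  have hint_div := hint (continuous_divergence hF).continuousOn
  calc ∫ x in Ω, f x (u x) (partialDerivs u x)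
      ≥ ∫ x in Ω, (h x - divergence (fun x => φ x (u x)) x) :=
        setIntegral_mono_on ((hint hh).sub hint_div) (hint hfu.continuousOn)
          (MeasurableSet.univ_pi fun _ => measurableSet_Ioo) hpointwise
    _ = ∫ x in Ω, h x := by rw [integral_sub (hint hh) hint_div, hdiv_zero, sub_zero]

theorem stmt_15
    (n : ℕ) (hn : 1 ≤ n)
    (a b : Fin n → ℝ) (hab : ∀ i, a i < b i)
    (f : (Fin n → ℝ) → ℝ → (Fin n → ℝ) → ℝ)
    (hf : Continuous fun p : (Fin n → ℝ) × ℝ × (Fin n → ℝ) => f p.1 p.2.1 p.2.2)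
    (h : (Fin n → ℝ) → ℝ)
    (hh : ContinuousOn h (Set.Icc a b))
    (φ : (Fin n → ℝ) → ℝ → (Fin n → ℝ))
    (hφ : ContDiff ℝ 1 fun p : (Fin n → ℝ) × ℝ => φ p.1 p.2)
    (hφ0 : ∀ x ∈ Set.Icc a b, φ x 0 = 0)
    (hpoint : ∀ x ∈ Set.Icc a b, ∀ (y : ℝ) (z : Fin n → ℝ),
      f x y z + ∑ i, (fderiv ℝ (fun x' => φ x' y i) x (Pi.single i 1)
        + deriv (fun t => φ x t i) y * z i) ≥ h x)
    (u : (Fin n → ℝ) → ℝ) (hu : ContDiff ℝ 1 u)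
    (hubc : ∀ x ∈ Set.Icc a b, (∃ i, x i = a i ∨ x i = b i) → u x = 0) :
    (∫ x in Set.univ.pi (fun i => Set.Ioo (a i) (b i)),
        f x (u x) (fun i => fderiv ℝ u x (Pi.single i 1)))
      ≥ ∫ x in Set.univ.pi (fun i => Set.Ioo (a i) (b i)), h x :=
  stmt_15_general n a b hab f hf h hh φ hφ hφ0 hpoint u hu hubc
end

section
/- Let t₀ < t₁ be reals, let α : [t₀,t₁] → ℝ be continuously differentiable with α(x) > 0 on [t₀,t₁], let β, c : [t₀,t₁] → ℝ be continuous with c(x) ≥ 0 on [t₀,t₁], and let μ ∈ ℝ. Let u* : ℝ → ℝ be twice continuously differentiable with u*(x) > 0 for all x ∈ (t₀,t₁), u*(t₀) = u*(t₁) = 0, u*'(t₀) ≠ 0, u*'(t₁) ≠ 0, and −(α u*')'(x) + β(x)·u*(x) = μ·c(x)·u*(x) for all x ∈ [t₀,t₁]. Then every continuously differentiable w : ℝ → ℝ with w(t₀) = w(t₁) = 0 satisfies ∫_{t₀}^{t₁} (α(x)·w'(x)² + β(x)·w(x)²) dx ≥ μ·∫_{t₀}^{t₁} c(x)·w(x)²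 dx. -/
/-!
Picone's identity: if `(a u')' = q u` and `u ≠ 0`, then `h = a u' w² / u` satisfies
`h' = a w'² + q w² - a (w' - (u'/u) w)² ≤ a w'² + q w²`. At the endpoints `u` has simple zeros
and `w` vanishes, so `w² / u → 0` and `h` extends continuously by `0`. The one-sided form of the
fundamental theorem of calculus then bounds the quadratic form below by `h t₁ - h t₀ = 0`,
without any integrability of `h'` near the endpoints.
-/

open Real MeasureTheory Set Filter Topology

theorem continuousAt_sq_div_of_hasDerivAt {f g : ℝ → ℝ} {f' g' a : ℝ}
    (hf : HasDerivAt f f' a) (hg : HasDerivAt g g' a) (hfa : f a = 0) (hga : g a = 0)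
    (hg' : g' ≠ 0) : ContinuousAt (fun x => f x ^ 2 / g x) a := by
  rw [← continuousWithinAt_compl_self, ContinuousWithinAt, hfa, hga, div_zero]
  have hlim : Tendsto (fun x => slope f a x ^ 2 * (x - a) / slope g a x) (𝓝[≠] a)
      (𝓝 (f' ^ 2 * (a - a) / g')) :=
    (((hasDerivAt_iff_tendsto_slope.mp hf).pow 2).mul
      (tendsto_nhdsWithin_of_tendsto_nhds (continuousAt_id.sub continuousAt_const))).div
      (hasDerivAt_iff_tendsto_slope.mp hg) hg'
  rw [sub_self, mul_zero, zero_div] at hlim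
  refine hlim.congr' (eventually_nhdsWithin_of_forall fun x hx => ?_)
  have hxa : x - a ≠ 0 := sub_ne_zero.mpr hx
  simp only [slope_def_field, hfa, hga, sub_zero]
  field_simp

theorem hasDerivAt_picone {a u u' w : ℝ → ℝ} {q w' x : ℝ}
    (hflux : HasDerivAt (fun s => a s * u' s) (q * u x) x) (hu : HasDerivAt u (u' x) x)
    (hw : HasDerivAt w w' x) (hux : u x ≠ 0) :
    HasDerivAt (fun s => a s * u' s * w s ^ 2 / u s)
      (a x * w' ^ 2 + q * w x ^ 2 - a x * (w' - u' x / u x * w x) ^ 2) x := by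
  refine ((hflux.fun_mul (hw.fun_pow 2)).fun_div hu hux).congr_deriv ?_
  field_simp
  ring

theorem continuousOn_mul_sq_div_of_simple_zeros {p u w : ℝ → ℝ} {t₀ t₁ : ℝ}
    (hp : ContinuousOn p (Icc t₀ t₁)) (hu : Differentiable ℝ u) (hw : Differentiable ℝ w)
    (hune : ∀ x ∈ Ioo t₀ t₁, u x ≠ 0) (hu₀ : u t₀ = 0) (hu₁ : u t₁ = 0)
    (hd₀ : deriv u t₀ ≠ 0) (hd₁ : deriv u t₁ ≠ 0) (hw₀ : w t₀ = 0) (hw₁ : w t₁ = 0) :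
    ContinuousOn (fun x => p x * (w x ^ 2 / u x)) (Icc t₀ t₁) := by
  refine hp.mul fun x hx => ContinuousAt.continuousWithinAt ?_
  rcases eq_endpoints_or_mem_Ioo_of_mem_Icc hx with rfl | rfl | hx
  · exact continuousAt_sq_div_of_hasDerivAt (hw x).hasDerivAt (hu x).hasDerivAt hw₀ hu₀ hd₀
  · exact continuousAt_sq_div_of_hasDerivAt (hw x).hasDerivAt (hu x).hasDerivAt hw₁ hu₁ hd₁
  · exact ((hw x).continuousAt.pow 2).div (hu x).continuousAt (hune x hx)

theorem integral_sturmLiouville_form_nonneg {a q u w : ℝ → ℝ} {t₀ t₁ : ℝ} (ht : t₀ ≤ t₁)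
    (ha : ContinuousOn a (Icc t₀ t₁)) (ha_nonneg : ∀ x ∈ Ioo t₀ t₁, 0 ≤ a x)
    (hu : Differentiable ℝ u) (hu' : ContinuousOn (deriv u) (Icc t₀ t₁))
    (hune : ∀ x ∈ Ioo t₀ t₁, u x ≠ 0) (hu₀ : u t₀ = 0) (hu₁ : u t₁ = 0)
    (hd₀ : deriv u t₀ ≠ 0) (hd₁ : deriv u t₁ ≠ 0)
    (hflux : ∀ x ∈ Ioo t₀ t₁, HasDerivAt (fun s => a s * deriv u s) (q x * u x) x)
    (hw : Differentiable ℝ w) (hw₀ : w t₀ = 0) (hw₁ : w t₁ = 0)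
    (hint : IntegrableOn (fun x => a x * deriv w x ^ 2 + q x * w x ^ 2) (Icc t₀ t₁)) :
    0 ≤ ∫ x in t₀..t₁, (a x * deriv w x ^ 2 + q x * w x ^ 2) := by
  -- `h` vanishes at both endpoints: there `u = 0`, and division by zero gives `0`.
  set h : ℝ → ℝ := fun x => a x * deriv u x * (w x ^ 2 / u x)
  have hcont : ContinuousOn h (Icc t₀ t₁) :=
    continuousOn_mul_sq_div_of_simple_zeros (ha.mul hu') hu hw hune hu₀ hu₁ hd₀ hd₁ hw₀ hw₁
  have hderiv : ∀ x ∈ Ioo t₀ t₁, HasDerivAt h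
      (a x * deriv w x ^ 2 + q x * w x ^ 2 - a x * (deriv w x - deriv u x / u x * w x) ^ 2) x :=
    fun x hx => by
      simpa only [h, mul_div_assoc] using
        hasDerivAt_picone (hflux x hx) (hu x).hasDerivAt (hw x).hasDerivAt (hune x hx)
  have hftc := intervalIntegral.sub_le_integral_of_hasDeriv_right_of_le ht hcont
    (fun x hx => (hderiv x hx).hasDerivWithinAt) hint
    (fun x hx => sub_le_self _ (mul_nonneg (ha_nonneg x hx) (sq_nonneg _)))
  simpa [h, hu₀, hu₁] using hftc

theorem stmt_17_general
    (t₀ t₁ : ℝ) (ht : t₀ < t₁)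
    (α β c : ℝ → ℝ)
    (hα : ContDiffOn ℝ 1 α (Icc t₀ t₁)) (hαpos : ∀ x ∈ Icc t₀ t₁, 0 < α x)
    (hβ : ContinuousOn β (Icc t₀ t₁)) (hc : ContinuousOn c (Icc t₀ t₁))
    (μ : ℝ)
    (ustar : ℝ → ℝ) (hustar : ContDiff ℝ 2 ustar)
    (hupos : ∀ x ∈ Ioo t₀ t₁, 0 < ustar x)
    (h0 : ustar t₀ = 0) (h1 : ustar t₁ = 0)
    (hd0 : deriv ustar t₀ ≠ 0) (hd1 : deriv ustar t₁ ≠ 0)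
    (hEL : ∀ x ∈ Icc t₀ t₁,
      -deriv (fun s => α s * deriv ustar s) x + β x * ustar x = μ * c x * ustar x)
    (w : ℝ → ℝ) (hw : ContDiff ℝ 1 w) (hw0 : w t₀ = 0) (hw1 : w t₁ = 0) :
    (∫ x in t₀..t₁, (α x * (deriv w x)^2 + β x * (w x)^2))
      ≥ μ * ∫ x in t₀..t₁, c x * (w x)^2 := by
  have hu'diff : Differentiable ℝ (deriv ustar) := hustar.differentiable_deriv_two
  have hflux : ∀ x ∈ Ioo t₀ t₁, HasDerivAt (fun s => α s * deriv ustar s)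
      ((β x - μ * c x) * ustar x) x := fun x hx => by
    have hαx : DifferentiableAt ℝ α x :=
      (hα.contDiffAt (Icc_mem_nhds hx.1 hx.2)).differentiableAt one_ne_zero
    refine (hαx.fun_mul (hu'diff x)).hasDerivAt.congr_deriv ?_
    linarith [hEL x (Ioo_subset_Icc_self hx)]
  have hwc : ContinuousOn w (Icc t₀ t₁) := hw.continuous.continuousOn
  have hw'c : ContinuousOn (deriv w) (Icc t₀ t₁) := (hw.continuous_deriv le_rfl).continuousOn
  have hkin : ContinuousOn (fun x => α x * deriv w x ^ 2 + β x * w x ^ 2) (Icc t₀ t₁) :=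
    (hα.continuousOn.mul (hw'c.pow 2)).add (hβ.mul (hwc.pow 2))
  have hpot : ContinuousOn (fun x => c x * w x ^ 2) (Icc t₀ t₁) := hc.mul (hwc.pow 2)
  have hnonneg := integral_sturmLiouville_form_nonneg (q := fun x => β x - μ * c x) ht.le
    hα.continuousOn (fun x hx => (hαpos x (Ioo_subset_Icc_self hx)).le)
    (hustar.differentiable (by norm_num)) hu'diff.continuous.continuousOn
    (fun x hx => (hupos x hx).ne') h0 h1 hd0 hd1 hflux
    (hw.differentiable one_ne_zero) hw0 hw1
    ((hα.continuousOn.mul (hw'c.pow 2)).add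
      ((hβ.sub (continuousOn_const.mul hc)).mul (hwc.pow 2))).integrableOn_Icc
  have hsplit : (∫ x in t₀..t₁, (α x * deriv w x ^ 2 + (β x - μ * c x) * w x ^ 2))
      = (∫ x in t₀..t₁, (α x * deriv w x ^ 2 + β x * w x ^ 2))
        - μ * ∫ x in t₀..t₁, c x * w x ^ 2 := by
    rw [← intervalIntegral.integral_const_mul, ← intervalIntegral.integral_sub]
    · congr 1 with x
      ring
    · exact hkin.intervalIntegrable_of_Icc ht.le
    · exact (continuousOn_const.mul hpot).intervalIntegrable_of_Icc ht.le
  linarith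

theorem stmt_17
    (t₀ t₁ : ℝ) (ht : t₀ < t₁)
    (α β c : ℝ → ℝ)
    (hα : ContDiffOn ℝ 1 α (Icc t₀ t₁)) (hαpos : ∀ x ∈ Icc t₀ t₁, 0 < α x)
    (hβ : ContinuousOn β (Icc t₀ t₁)) (hc : ContinuousOn c (Icc t₀ t₁))
    (hcnn : ∀ x ∈ Icc t₀ t₁, 0 ≤ c x)
    (μ : ℝ)
    (ustar : ℝ → ℝ) (hustar : ContDiff ℝ 2 ustar)
    (hupos : ∀ x ∈ Ioo t₀ t₁, 0 < ustar x)
    (h0 : ustar t₀ = 0) (h1 : ustar t₁ = 0)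
    (hd0 : deriv ustar t₀ ≠ 0) (hd1 : deriv ustar t₁ ≠ 0)
    (hEL : ∀ x ∈ Icc t₀ t₁,
      -deriv (fun s => α s * deriv ustar s) x + β x * ustar x = μ * c x * ustar x)
    (w : ℝ → ℝ) (hw : ContDiff ℝ 1 w) (hw0 : w t₀ = 0) (hw1 : w t₁ = 0) :
    (∫ x in t₀..t₁, (α x * (deriv w x)^2 + β x * (w x)^2))
      ≥ μ * ∫ x in t₀..t₁, c x * (w x)^2 :=
  stmt_17_general t₀ t₁ ht α β c hα hαpos hβ hc μ ustar hustar hupos h0 h1 hd0 hd1 hEL w hw hw0 hw1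
end

section
/- Let u : ℝ → ℝ be continuously differentiable with u(−π/3) = u(π/3) = 0, and define g on the open interval (−π/3, π/3) by g(x) = 2·u(x)²·sin x/(2cos x − 1). Then: (i) g(x) → 0 as x → −π/3 from the right and as x → π/3 from the left, so g extends to a continuous function on [−π/3, π/3] vanishing at both endpoints; (ii) g is differentiable on (−π/3, π/3) with g' integrable over (−π/3, π/3); and (iii) ∫_{−π/3}^{π/3} g'(x) dx = 0. -/
open Real MeasureTheory Set Filter Topology

/-!
Write `g = p u² / d` with `p = 2 sin` and `d = 2 cos - 1`. The denominator `d` has simple zeros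
at `±π/3`, where `u` vanishes as well, so `q = u / d` has finite one-sided limits `u' / d'` there
and extends continuously to the closed interval. Then `G = p u q` is a continuous extension of `g`
vanishing at both endpoints, and `g' = p' u q + 2 p u' q - p d' q²` is continuous on the closed
interval, hence integrable; the fundamental theorem of calculus gives
`∫ g' = G(π/3) - G(-π/3) = 0`.
-/

theorem tendsto_div_nhdsNE_of_hasDerivAt {𝕜 : Type*} [NontriviallyNormedField 𝕜]
    {f d : 𝕜 → 𝕜} {e f' d' : 𝕜} (hf : HasDerivAt f f' e) (hd : HasDerivAt d d' e)
    (hfe : f e = 0) (hde : d e = 0) (hd' : d' ≠ 0) :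
    Tendsto (fun x => f x / d x) (𝓝[≠] e) (𝓝 (f' / d')) := by
  refine (hf.tendsto_slope.div hd.tendsto_slope hd').congr' ?_
  filter_upwards [self_mem_nhdsWithin] with x hx
  have hxe : x - e ≠ 0 := sub_ne_zero.mpr hx
  rw [Pi.div_apply, slope_def_field, slope_def_field, hfe, hde, sub_zero, sub_zero,
    div_div_div_cancel_right₀ hxe]

section

variable {a b : ℝ} {u d p g G : ℝ → ℝ}

theorem exists_continuousOn_Icc_eqOn_div (hab : a < b) (hu : Differentiable ℝ u)
    (hd : Differentiable ℝ d) (hua : u a = 0) (hub : u b = 0) (hda : d a = 0) (hdb : d b = 0)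
    (hd'a : deriv d a ≠ 0) (hd'b : deriv d b ≠ 0) (hd_ne : ∀ x ∈ Ioo a b, d x ≠ 0) :
    ∃ q, ContinuousOn q (Icc a b) ∧ EqOn q (fun x => u x / d x) (Ioo a b) := by
  have hcont : ContinuousOn (fun x => u x / d x) (Ioo a b) :=
    hu.continuous.continuousOn.div hd.continuous.continuousOn hd_ne
  refine ⟨extendFrom (Ioo a b) (fun x => u x / d x), ?_, extendFrom_extends hcont⟩
  refine continuousOn_extendFrom (closure_Ioo hab.ne).superset fun x hx => ?_
  rcases eq_or_ne x a with rfl | hxa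
  · exact ⟨_, (tendsto_div_nhdsNE_of_hasDerivAt (hu x).hasDerivAt (hd x).hasDerivAt hua hda
      hd'a).mono_left (nhdsWithin_mono _ fun y hy => hy.1.ne')⟩
  rcases eq_or_ne x b with rfl | hxb
  · exact ⟨_, (tendsto_div_nhdsNE_of_hasDerivAt (hu x).hasDerivAt (hd x).hasDerivAt hub hdb
      hd'b).mono_left (nhdsWithin_mono _ fun y hy => hy.2.ne)⟩
  exact ⟨_, hcont _ ⟨hx.1.lt_of_ne' hxa, hx.2.lt_of_ne hxb⟩⟩

theorem hasDerivAt_mul_sq_div {x : ℝ} (hp : DifferentiableAt ℝ p x)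
    (hu : DifferentiableAt ℝ u x) (hd : DifferentiableAt ℝ d x) (hdx : d x ≠ 0) :
    HasDerivAt (fun y => p y * u y ^ 2 / d y)
      (deriv p x * u x * (u x / d x) + 2 * p x * deriv u x * (u x / d x)
        - p x * deriv d x * (u x / d x) ^ 2) x := by
  refine ((hp.hasDerivAt.fun_mul (hu.hasDerivAt.fun_pow 2)).fun_div hd.hasDerivAt hdx).congr_deriv
    ?_
  field_simp
  ring

theorem tendsto_nhdsGT_of_continuousOn_Icc_of_eqOn (hab : a < b) (hG : ContinuousOn G (Icc a b))
    (hgG : EqOn g G (Ioo a b)) : Tendsto g (𝓝[>] a) (𝓝 (G a)) := by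
  rw [← nhdsWithin_Ioo_eq_nhdsGT hab]
  refine ((hG a (left_mem_Icc.2 hab.le)).mono Ioo_subset_Icc_self).congr' ?_
  filter_upwards [self_mem_nhdsWithin] with x hx using (hgG hx).symm

theorem tendsto_nhdsLT_of_continuousOn_Icc_of_eqOn (hab : a < b) (hG : ContinuousOn G (Icc a b))
    (hgG : EqOn g G (Ioo a b)) : Tendsto g (𝓝[<] b) (𝓝 (G b)) := by
  rw [← nhdsWithin_Ioo_eq_nhdsLT hab]
  refine ((hG b (right_mem_Icc.2 hab.le)).mono Ioo_subset_Icc_self).congr' ?_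
  filter_upwards [self_mem_nhdsWithin] with x hx using (hgG hx).symm

theorem mul_sq_div_tendsto_and_integral_deriv_eq_zero (hab : a < b) (hu : ContDiff ℝ 1 u)
    (hp : ContDiff ℝ 1 p) (hd : ContDiff ℝ 1 d) (hua : u a = 0) (hub : u b = 0) (hda : d a = 0)
    (hdb : d b = 0) (hd'a : deriv d a ≠ 0) (hd'b : deriv d b ≠ 0)
    (hd_ne : ∀ x ∈ Ioo a b, d x ≠ 0) (hg : ∀ x ∈ Ioo a b, g x = p x * u x ^ 2 / d x) :
    (Tendsto g (𝓝[>] a) (𝓝 0) ∧ Tendsto g (𝓝[<] b) (𝓝 0)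
      ∧ ∃ G : ℝ → ℝ, ContinuousOn G (Icc a b) ∧ (∀ x ∈ Ioo a b, G x = g x)
          ∧ G a = 0 ∧ G b = 0)
    ∧ ((∀ x ∈ Ioo a b, DifferentiableAt ℝ g x) ∧ IntegrableOn (deriv g) (Ioo a b))
    ∧ ∫ x in Ioo a b, deriv g x = 0 := by
  have hu₁ : Differentiable ℝ u := hu.differentiable one_ne_zero
  have hp₁ : Differentiable ℝ p := hp.differentiable one_ne_zero
  have hd₁ : Differentiable ℝ d := hd.differentiable one_ne_zero
  obtain ⟨q, hq, hq_eq⟩ :=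
    exists_continuousOn_Icc_eqOn_div hab hu₁ hd₁ hua hub hda hdb hd'a hd'b hd_ne
  set G := fun x => p x * u x * q x
  have hG : ContinuousOn G (Icc a b) := (hp.continuous.mul hu.continuous).continuousOn.mul hq
  have hGg : ∀ x ∈ Ioo a b, G x = g x := fun x hx => by
    simp only [G, hg x hx, hq_eq hx]
    ring
  have hGa : G a = 0 := by simp [G, hua]
  have hGb : G b = 0 := by simp [G, hub]
  set F := fun x => deriv p x * u x * q x + 2 * p x * deriv u x * q x - p x * deriv d x * q x ^ 2
  have hgF : ∀ x ∈ Ioo a b, HasDerivAt g (F x) x := fun x hx => by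
    have hgx : g =ᶠ[𝓝 x] fun y => p y * u y ^ 2 / d y :=
      eventually_of_mem (isOpen_Ioo.mem_nhds hx) hg
    simpa only [F, hq_eq hx] using
      (hasDerivAt_mul_sq_div (hp₁ x) (hu₁ x) (hd₁ x) (hd_ne x hx)).congr_of_eventuallyEq hgx
  have hF : ContinuousOn F (Icc a b) := by
    have := hp.continuous_deriv le_rfl
    have := hu.continuous_deriv le_rfl
    have := hd.continuous_deriv le_rfl
    have := hu.continuous
    have := hp.continuous
    fun_prop
  have hg'F : EqOn (deriv g) F (Ioo a b) := fun x hx => (hgF x hx).deriv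
  have hg' : IntegrableOn (deriv g) (Ioo a b) :=
    ((hF.integrableOn_Icc).mono_set Ioo_subset_Icc_self).congr_fun hg'F.symm measurableSet_Ioo
  have hgG : EqOn g G (Ioo a b) := fun x hx => (hGg x hx).symm
  have hlima := hGa ▸ tendsto_nhdsGT_of_continuousOn_Icc_of_eqOn hab hG hgG
  have hlimb := hGb ▸ tendsto_nhdsLT_of_continuousOn_Icc_of_eqOn hab hG hgG
  refine ⟨⟨hlima, hlimb, G, hG, hGg, hGa, hGb⟩,
    ⟨fun x hx => (hgF x hx).differentiableAt, hg'⟩, ?_⟩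
  rw [← integral_Ioc_eq_integral_Ioo, ← intervalIntegral.integral_of_le hab.le]
  simpa using intervalIntegral.integral_eq_sub_of_hasDerivAt_of_tendsto hab
    (fun x hx => (hgF x hx).differentiableAt.hasDerivAt)
    ((intervalIntegrable_iff_integrableOn_Ioo_of_le hab.le).2 hg') hlima hlimb

end

theorem two_mul_cos_sub_one_pos {x : ℝ} (hx : x ∈ Ioo (-(π / 3)) (π / 3)) :
    0 < 2 * cos x - 1 := by
  have : cos (π / 3) < cos |x| :=
    cos_lt_cos_of_nonneg_of_le_pi (abs_nonneg x) (by linarith [pi_pos]) (abs_lt.2 hx)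
  rw [cos_abs, cos_pi_div_three] at this
  linarith

theorem stmt_18
    (u : ℝ → ℝ) (hu : ContDiff ℝ 1 u)
    (hu0 : u (-(Real.pi/3)) = 0) (hu1 : u (Real.pi/3) = 0)
    (g : ℝ → ℝ)
    (hg : ∀ x ∈ Set.Ioo (-(Real.pi/3)) (Real.pi/3),
      g x = 2 * (u x)^2 * Real.sin x / (2 * Real.cos x - 1)) :
    (Filter.Tendsto g (nhdsWithin (-(Real.pi/3)) (Set.Ioi (-(Real.pi/3)))) (nhds 0)
      ∧ Filter.Tendsto g (nhdsWithin (Real.pi/3) (Set.Iio (Real.pi/3))) (nhds 0)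
      ∧ ∃ G : ℝ → ℝ, ContinuousOn G (Set.Icc (-(Real.pi/3)) (Real.pi/3))
          ∧ (∀ x ∈ Set.Ioo (-(Real.pi/3)) (Real.pi/3), G x = g x)
          ∧ G (-(Real.pi/3)) = 0 ∧ G (Real.pi/3) = 0)
    ∧ ((∀ x ∈ Set.Ioo (-(Real.pi/3)) (Real.pi/3), DifferentiableAt ℝ g x)
      ∧ MeasureTheory.IntegrableOn (deriv g) (Set.Ioo (-(Real.pi/3)) (Real.pi/3)))
    ∧ (∫ x in Set.Ioo (-(Real.pi/3)) (Real.pi/3), deriv g x) = 0 := by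
  refine mul_sq_div_tendsto_and_integral_deriv_eq_zero (p := fun x => 2 * sin x)
    (d := fun x => 2 * cos x - 1) (by linarith [pi_pos]) hu (by fun_prop) (by fun_prop) hu0 hu1
    (by simp) (by simp) (by simp) (by simp)
    (fun x hx => (two_mul_cos_sub_one_pos hx).ne') fun x hx => by rw [hg x hx]; ring
end
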